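/- Let B and C be unital C*-algebras with C commutative, and let Ψ : B → C be a faithful central unital completely positive map that maps the closed unit ball of B onto the closed unit ball of C. Then the restriction of Ψ to its multiplicative domain Mult(Ψ) is a *-isomorphism from Mult(Ψ) onto C. -/

import Mathlib

/-- A linear map between C*-algebras is completely positive if for each `n` the induced
map on `n × n` matrices is positive (positivity of a matrix over a C*-algebra meaning
being of the form `star w * w`). -/
def IsCPMap {B C : Type*} [CStarAlgebra B] [CStarAlgebra C] (Ψ : B →L[ℂ] C) : Prop :=
  ∀ (n : ℕ) (v : Matrix (Fin n) (Fin n) B),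
    ∃ w : Matrix (Fin n) (Fin n) C, (star v * v).map Ψ = star w * w

/-- The multiplicative domain of a map `Ψ`. -/
def MultDomain {B C : Type*} [CStarAlgebra B] [CStarAlgebra C] (Ψ : B →L[ℂ] C) : Set B :=
  {v : B | Ψ (star v * v) = star (Ψ v) * Ψ v ∧ Ψ (v * star v) = Ψ v * star (Ψ v)}

/-!
For every character `φ` of `C`, `φ ∘ Ψ` is a state on `B`, so by Cauchy–Schwarz any `v` with
`φ (Ψ (v* v)) = |φ (Ψ v)|²` satisfies `φ (Ψ (b v)) = φ (Ψ b) φ (Ψ v)` for all `b`. As characters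
separate the points of `C`, this is Choi's description of `MultDomain Ψ` as the set of `v` at
which `Ψ` is multiplicative against every `b` on both sides; in particular `MultDomain Ψ` is a
subspace on which `Ψ` is multiplicative, and faithfulness makes it injective there. A contraction
`b` lifting a unitary `u` satisfies `1 = |φ (Ψ b)|² ≤ φ (Ψ (b* b)) ≤ 1` for every `φ`, so it lies
in `MultDomain Ψ`; since unitaries span `C`, `Ψ` maps `MultDomain Ψ` onto `C`.
-/

open scoped ComplexOrder
open WeakDual

namespace PositiveLinearMap

section NonUnital

variable {A : Type*} [NonUnitalCStarAlgebra A] [PartialOrder A] [StarOrderedRing A]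
  (f : A →ₚ[ℂ] ℂ)

lemma norm_apply_star_mul_sq_le (a b : A) :
    ‖f (star a * b)‖ ^ 2 ≤ ‖f (star a * a)‖ * ‖f (star b * b)‖ := by
  have h := norm_inner_le_norm (𝕜 := ℂ) (f.toPreGNS a) (f.toPreGNS b)
  have ha := f.preGNS_norm_sq (f.toPreGNS a)
  have hb := f.preGNS_norm_sq (f.toPreGNS b)
  rw [preGNS_inner_def] at h
  simp only [ofPreGNS_toPreGNS] at ha hb h
  rw [← ha, ← hb]
  simp only [← Complex.ofReal_pow, Complex.norm_real, Real.norm_eq_abs, abs_pow, abs_norm]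
  calc ‖f (star a * b)‖ ^ 2 ≤ (‖f.toPreGNS a‖ * ‖f.toPreGNS b‖) ^ 2 := by gcongr
    _ = _ := by ring

lemma apply_mul_eq_zero_of_apply_star_mul_self_eq_zero {a : A} (ha : f (star a * a) = 0)
    (b : A) : f (b * a) = 0 := by
  have h := f.norm_apply_star_mul_sq_le (star b) a
  rw [star_star, ha, norm_zero, mul_zero] at h
  exact norm_eq_zero.mp (pow_eq_zero_iff two_ne_zero |>.mp (le_antisymm h (by positivity)))

end NonUnital

variable {A : Type*} [CStarAlgebra A] [PartialOrder A] [StarOrderedRing A]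
  (f : A →ₚ[ℂ] ℂ) (hf : f 1 = 1)
include hf

lemma star_apply_mul_apply_le (b : A) : star (f b) * f b ≤ f (star b * b) := by
  have h := f.norm_apply_star_mul_sq_le 1 b
  rw [star_one, one_mul, mul_one, hf, norm_one, one_mul] at h
  have hb : 0 ≤ f (star b * b) := f.map_nonneg (star_mul_self_nonneg b)
  rw [Complex.star_def, Complex.conj_mul', Complex.eq_coe_norm_of_nonneg hb]
  exact_mod_cast h

lemma apply_star_mul_self_le_one {b : A} (hb : ‖b‖ ≤ 1) : f (star b * b) ≤ 1 := by
  calc f (star b * b) ≤ f (algebraMap ℝ A (‖b‖ ^ 2)) :=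
        f.monotone' CStarAlgebra.star_mul_le_algebraMap_norm_sq
    _ ≤ f 1 := by
        apply f.monotone'
        rw [← map_one (algebraMap ℝ A)]
        exact algebraMap_mono A (pow_le_one₀ (norm_nonneg b) hb)
    _ = 1 := hf

lemma apply_mul_eq_mul_of_apply_star_mul_self {v : A}
    (hv : f (star v * v) = star (f v) * f v) (b : A) : f (b * v) = f b * f v := by
  set a := v - algebraMap ℂ A (f v)
  have ha : f (star a * a) = 0 := by
    simp only [a, Algebra.algebraMap_eq_smul_one, star_sub, star_smul, star_one, sub_mul, mul_sub,
      smul_mul_assoc, mul_smul_comm, one_mul, mul_one, map_sub, map_smul, smul_eq_mul, hv,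
      map_star, hf]
    ring
  have := f.apply_mul_eq_zero_of_apply_star_mul_self_eq_zero ha b
  rw [mul_sub, map_sub, Algebra.algebraMap_eq_smul_one, mul_smul_comm, mul_one, map_smul,
    smul_eq_mul, sub_eq_zero] at this
  rw [this, mul_comm]

end PositiveLinearMap

lemma eq_of_forall_character_apply_eq {C : Type*} [CommCStarAlgebra C] {x y : C}
    (h : ∀ φ : characterSpace ℂ C, φ x = φ y) : x = y :=
  (gelfandTransform_bijective C).injective (ContinuousMap.ext h)

section PositiveMap

variable {B C : Type*} [CStarAlgebra B] [CommCStarAlgebra C] {Ψ : B →L[ℂ] C}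

def IsPositiveMap (Ψ : B →L[ℂ] C) : Prop :=
  ∀ b : B, ∃ w : C, Ψ (star b * b) = star w * w

lemma IsCPMap.isPositiveMap (hcp : IsCPMap Ψ) : IsPositiveMap Ψ := by
  intro b
  obtain ⟨w, hw⟩ := hcp 1 (Matrix.of fun _ _ => b)
  refine ⟨w 0 0, ?_⟩
  simpa [Matrix.mul_apply, Matrix.star_apply] using congrFun (congrFun hw 0) 0

namespace IsPositiveMap

noncomputable def characterState [PartialOrder B] [StarOrderedRing B] (hΨ : IsPositiveMap Ψ)
    (φ : characterSpace ℂ C) : B →ₚ[ℂ] ℂ :=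
  PositiveLinearMap.mk₀ ((CharacterSpace.toAlgHom φ).toLinearMap ∘ₗ Ψ.toLinearMap)
    fun x hx => by
      obtain ⟨s, rfl⟩ := CStarAlgebra.nonneg_iff_eq_star_mul_self.mp hx
      obtain ⟨w, hw⟩ := hΨ s
      change 0 ≤ φ (Ψ (star s * s))
      rw [hw, map_mul, map_star]
      exact star_mul_self_nonneg _

@[simp]
lemma characterState_apply [PartialOrder B] [StarOrderedRing B] (hΨ : IsPositiveMap Ψ)
    (φ : characterSpace ℂ C) (b : B) : hΨ.characterState φ b = φ (Ψ b) :=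
  rfl

lemma map_star (hΨ : IsPositiveMap Ψ) (b : B) : Ψ (star b) = star (Ψ b) := by
  let := CStarAlgebra.spectralOrder B
  have := CStarAlgebra.spectralOrderedRing B
  refine eq_of_forall_character_apply_eq fun φ => ?_
  rw [StarHomClass.map_star φ]
  exact StarHomClass.map_star (hΨ.characterState φ) b

lemma apply_mul_eq_mul_of_apply_star_mul_self (hΨ : IsPositiveMap Ψ) (h1 : Ψ 1 = 1) {v : B}
    (hv : Ψ (star v * v) = star (Ψ v) * Ψ v) (b : B) : Ψ (b * v) = Ψ b * Ψ v := by
  let := CStarAlgebra.spectralOrder B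
  have := CStarAlgebra.spectralOrderedRing B
  refine eq_of_forall_character_apply_eq fun φ => ?_
  have hφv : hΨ.characterState φ (star v * v) =
      star (hΨ.characterState φ v) * hΨ.characterState φ v := by
    simp only [characterState_apply, hv, map_mul, StarHomClass.map_star]
  rw [map_mul φ]
  exact (hΨ.characterState φ).apply_mul_eq_mul_of_apply_star_mul_self (by simp [h1]) hφv b

lemma apply_star_mul_self_eq_one (hΨ : IsPositiveMap Ψ) (h1 : Ψ 1 = 1) {b : B} (hb : ‖b‖ ≤ 1)
    (hΨb : star (Ψ b) * Ψ b = 1) : Ψ (star b * b) = 1 := by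
  let := CStarAlgebra.spectralOrder B
  have := CStarAlgebra.spectralOrderedRing B
  refine eq_of_forall_character_apply_eq fun φ => ?_
  have hf1 : hΨ.characterState φ 1 = 1 := by simp [h1]
  have hφu : star (hΨ.characterState φ b) * hΨ.characterState φ b = 1 := by
    simpa only [characterState_apply, map_mul, StarHomClass.map_star, map_one] using congrArg φ hΨb
  rw [map_one]
  refine le_antisymm ((hΨ.characterState φ).apply_star_mul_self_le_one hf1 hb) ?_
  exact hφu ▸ (hΨ.characterState φ).star_apply_mul_apply_le hf1 b

end IsPositiveMap

variable (Ψ) in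
def multiplicativeSubmodule : Submodule ℂ B where
  carrier := {v | ∀ b, Ψ (b * v) = Ψ b * Ψ v ∧ Ψ (v * b) = Ψ v * Ψ b}
  add_mem' hv hw b := by
    simp only [mul_add, add_mul, map_add, (hv b).1, (hw b).1, (hv b).2, (hw b).2, and_self]
  zero_mem' b := by simp
  smul_mem' c v hv b := by
    simp only [mul_smul_comm, smul_mul_assoc, map_smul, (hv b).1, (hv b).2, and_self]

lemma IsPositiveMap.multDomain_eq (hΨ : IsPositiveMap Ψ) (h1 : Ψ 1 = 1) :
    MultDomain Ψ = multiplicativeSubmodule Ψ := by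
  ext v
  constructor
  · rintro ⟨hv, hv'⟩ b
    refine ⟨hΨ.apply_mul_eq_mul_of_apply_star_mul_self h1 hv b, ?_⟩
    have hsv : Ψ (star (star v) * star v) = star (Ψ (star v)) * Ψ (star v) := by
      rw [star_star, hv', hΨ.map_star, star_star]
    have := congrArg star (hΨ.apply_mul_eq_mul_of_apply_star_mul_self h1 hsv (star b))
    rwa [← hΨ.map_star, star_mul, star_star, star_star, star_mul, ← hΨ.map_star,
      ← hΨ.map_star, star_star, star_star] at this
  · intro hv
    refine ⟨?_, ?_⟩
    · rw [← hΨ.map_star]; exact (hv (star v)).1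
    · rw [← hΨ.map_star]; exact (hv (star v)).2

lemma IsPositiveMap.exists_mem_multDomain_apply_eq (hΨ : IsPositiveMap Ψ) (h1 : Ψ 1 = 1)
    (honto : ∀ c : C, ‖c‖ ≤ 1 → ∃ b : B, ‖b‖ ≤ 1 ∧ Ψ b = c) {u : C} (hu : u ∈ unitary C) :
    ∃ b ∈ MultDomain Ψ, Ψ b = u := by
  have hu_norm : ‖u‖ ≤ 1 := by
    rcases subsingleton_or_nontrivial C with hC | hC
    · simp [Subsingleton.elim u 0]
    · exact (CStarRing.norm_of_mem_unitary hu).le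
  obtain ⟨b, hb, rfl⟩ := honto u hu_norm
  refine ⟨b, ⟨?_, ?_⟩, rfl⟩
  · rw [hΨ.apply_star_mul_self_eq_one h1 hb (Unitary.star_mul_self_of_mem hu),
      Unitary.star_mul_self_of_mem hu]
  · have hsb := hΨ.apply_star_mul_self_eq_one h1 (b := star b) (by rwa [norm_star])
      (by rw [hΨ.map_star, star_star]; exact Unitary.mul_star_self_of_mem hu)
    rw [star_star] at hsb
    rw [hsb, Unitary.mul_star_self_of_mem hu]

end PositiveMap

theorem multDomain_iso_of_onto_unit_ball_general
    {B C : Type*} [CStarAlgebra B] [CommCStarAlgebra C]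
    (Ψ : B →L[ℂ] C) (hunital : Ψ 1 = 1) (hcp : IsCPMap Ψ)
    (hfaithful : ∀ b : B, Ψ (star b * b) = 0 → b = 0)
    (honto : ∀ c : C, ‖c‖ ≤ 1 → ∃ b : B, ‖b‖ ≤ 1 ∧ Ψ b = c) :
    (∀ v ∈ MultDomain Ψ, ∀ w ∈ MultDomain Ψ, Ψ (v * w) = Ψ v * Ψ w) ∧
    (∀ v ∈ MultDomain Ψ, Ψ (star v) = star (Ψ v)) ∧
    Set.InjOn Ψ (MultDomain Ψ) ∧
    Ψ '' (MultDomain Ψ) = Set.univ := by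
  have hΨ := hcp.isPositiveMap
  have hM := hΨ.multDomain_eq hunital
  refine ⟨fun v hv w _ => ((hM ▸ hv) w).2, fun v _ => hΨ.map_star v, ?_, ?_⟩
  · intro v hv w hw hvw
    have hsub : v - w ∈ MultDomain Ψ := by
      rw [hM] at hv hw ⊢
      exact sub_mem hv hw
    refine sub_eq_zero.mp (hfaithful _ ?_)
    rw [hsub.1, map_sub, hvw, sub_self, mul_zero]
  · have hmap : (multiplicativeSubmodule Ψ).map Ψ.toLinearMap = ⊤ := by
      rw [eq_top_iff, ← CStarAlgebra.span_unitary, Submodule.span_le]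
      intro u hu
      obtain ⟨b, hb, rfl⟩ := hΨ.exists_mem_multDomain_apply_eq hunital honto hu
      exact ⟨b, hM ▸ hb, rfl⟩
    change Ψ.toLinearMap '' _ = _
    rw [hM, ← Submodule.map_coe, hmap, Submodule.top_coe]

/-- (Kirchberg–Rørdam, Lemma 6.2, second part).  Let `B, C` be unital C*-algebras with
`C` commutative, and let `Ψ : B → C` be a faithful central unital completely positive map
mapping the closed unit ball of `B` onto the closed unit ball of `C`.  Then the
restriction of `Ψ` to its multiplicative domain is a *-isomorphism onto `C`:
it is multiplicative, star-preserving, injective on `MultDomain Ψ` and maps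
`MultDomain Ψ` onto `C`. -/
theorem multDomain_iso_of_onto_unit_ball
    {B C : Type*} [CStarAlgebra B] [CommCStarAlgebra C]
    (Ψ : B →L[ℂ] C) (hunital : Ψ 1 = 1) (hcp : IsCPMap Ψ)
    (hfaithful : ∀ b : B, Ψ (star b * b) = 0 → b = 0)
    (hcentral : ∀ a b : B, Ψ (a * b) = Ψ (b * a))
    (honto : ∀ c : C, ‖c‖ ≤ 1 → ∃ b : B, ‖b‖ ≤ 1 ∧ Ψ b = c) :
    (∀ v ∈ MultDomain Ψ, ∀ w ∈ MultDomain Ψ, Ψ (v * w) = Ψ v * Ψ w) ∧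
    (∀ v ∈ MultDomain Ψ, Ψ (star v) = star (Ψ v)) ∧
    Set.InjOn Ψ (MultDomain Ψ) ∧
    Ψ '' (MultDomain Ψ) = Set.univ :=
  multDomain_iso_of_onto_unit_ball_general Ψ hunital hcp hfaithful honto
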